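/- Let (X_i) be i.i.d. uniform on [0,1] and for t ≥ 0 let K(t) be the minimal n such that ∑_{i=1}^n ln(1+(e-1)X_i) > t. Then K(t) is finite almost surely, and its expectation N(t) satisfies (e-1)t < N(t) ≤ (e-1)(t+1) for all t ≥ 0. -/

import Mathlib

open MeasureTheory ProbabilityTheory
open scoped ENNReal NNReal

/-- First time `n` that the partial sums `∑_{i<n} g (X i ω)` exceed `t`
(junk value `0` via `sInf ∅` if this never happens). -/
noncomputable def hitTime {Ω : Type*} (g : ℝ → ℝ) (X : ℕ → Ω → ℝ) (t : ℝ) (ω : Ω) : ℕ :=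
  sInf {n : ℕ | t < ∑ i ∈ Finset.range n, g (X i ω)}

/-! ### Auxiliary definitions and lemmas -/

noncomputable def Gf (x : ℝ) : ℝ := Real.log (1 + (Real.exp 1 - 1) * x)

lemma Gf_meas : Measurable Gf := Real.measurable_log.comp (by fun_prop)

lemma e1_pos' : 0 < Real.exp 1 - 1 := by have := Real.exp_one_gt_d9; nlinarith

lemma Gf_nonneg {x : ℝ} (hx : x ∈ Set.Icc (0:ℝ) 1) : 0 ≤ Gf x :=
  Real.log_nonneg (by nlinarith [e1_pos', hx.1])

lemma Gf_le_one {x : ℝ} (hx : x ∈ Set.Icc (0:ℝ) 1) : Gf x ≤ 1 := by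
  have h1 : 0 < 1 + (Real.exp 1 - 1) * x := by nlinarith [e1_pos', hx.1]
  rw [Gf, Real.log_le_iff_le_exp h1]
  nlinarith [e1_pos', hx.2]

lemma aux_deriv (x : ℝ) (hx : (0:ℝ) ≤ x) :
    HasDerivAt (fun y => ((1 + (Real.exp 1 - 1) * y) * Real.log (1 + (Real.exp 1 - 1) * y)
      - (1 + (Real.exp 1 - 1) * y)) / (Real.exp 1 - 1))
      (Real.log (1 + (Real.exp 1 - 1) * x)) x := by
  set c := Real.exp 1 - 1 with hc
  have hcpos : 0 < c := e1_pos'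
  have hu : HasDerivAt (fun y => 1 + c * y) c x := by
    simpa using ((hasDerivAt_id x).const_mul c).const_add 1
  have hux : 0 < 1 + c * x := by nlinarith
  have hlog : HasDerivAt (fun y => Real.log (1 + c * y)) (c / (1 + c * x)) x :=
    hu.log hux.ne'
  have hmul : HasDerivAt (fun y => (1 + c * y) * Real.log (1 + c * y))
      (c * Real.log (1 + c * x) + (1 + c * x) * (c / (1 + c * x))) x := hu.mul hlog
  have h2 := (hmul.sub hu).div_const c
  refine h2.congr_deriv ?_
  field_simp
  ring

lemma aux_integral :
    ∫ x in Set.Icc (0:ℝ) 1, Gf x = 1 / (Real.exp 1 - 1) := by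
  have hcpos : 0 < Real.exp 1 - 1 := e1_pos'
  rw [show Gf = fun x => Real.log (1 + (Real.exp 1 - 1) * x) from rfl]
  rw [MeasureTheory.integral_Icc_eq_integral_Ioc,
    ← intervalIntegral.integral_of_le (zero_le_one : (0:ℝ) ≤ 1)]
  have hcont : ContinuousOn (fun x => Real.log (1 + (Real.exp 1 - 1) * x))
      (Set.uIcc (0:ℝ) 1) := by
    apply Real.continuousOn_log.comp (by fun_prop)
    intro x hx
    rw [Set.uIcc_of_le zero_le_one] at hx
    have : 0 < 1 + (Real.exp 1 - 1) * x := by nlinarith [hx.1]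
    simpa using this.ne'
  rw [intervalIntegral.integral_eq_sub_of_hasDerivAt
    (fun x hx => aux_deriv x (by rw [Set.uIcc_of_le zero_le_one] at hx; exact hx.1))
    (hcont.intervalIntegrable)]
  have : (1:ℝ) + (Real.exp 1 - 1) * 1 = Real.exp 1 := by ring
  rw [this]
  simp [Real.log_exp]
  field_simp

lemma nat_lt_sInf_iff (M : Set ℕ) (i : ℕ) :
    i < sInf M ↔ M.Nonempty ∧ ∀ j ≤ i, j ∉ M := by
  constructor
  · intro h
    rcases Set.eq_empty_or_nonempty M with rfl | hne
    · simp [Nat.sInf_empty] at h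
    · exact ⟨hne, fun j hj hjM => absurd ((Nat.sInf_le hjM).trans hj) (not_le.2 h)⟩
  · rintro ⟨hne, h⟩
    by_contra hlt
    exact h _ (not_lt.1 hlt) (Nat.sInf_mem hne)

section Main

variable {Ω : Type*} [MeasurableSpace Ω]

noncomputable def Sf (X : ℕ → Ω → ℝ) (n : ℕ) (ω : Ω) : ℝ :=
  ∑ i ∈ Finset.range n, Gf (X i ω)

lemma Sf_meas (X : ℕ → Ω → ℝ) (hmeas : ∀ i, Measurable (X i)) (n : ℕ) :
    Measurable (Sf X n) :=
  Finset.measurable_sum _ (fun i _ => Gf_meas.comp (hmeas i))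

def Aset (X : ℕ → Ω → ℝ) (t : ℝ) (i : ℕ) : Set Ω := {ω | ∀ j ≤ i, Sf X j ω ≤ t}

lemma Aset_meas (X : ℕ → Ω → ℝ) (hmeas : ∀ i, Measurable (X i)) (t : ℝ) (i : ℕ) :
    MeasurableSet (Aset X t i) := by
  have : Aset X t i = ⋂ j, ⋂ (_ : j ≤ i), {ω | Sf X j ω ≤ t} := by
    ext ω; simp [Aset]
  rw [this]
  exact MeasurableSet.iInter fun j => MeasurableSet.iInter fun _ =>
    measurableSet_le (Sf_meas X hmeas j) measurable_const

lemma indep_A (P : Measure Ω) [IsProbabilityMeasure P] (X : ℕ → Ω → ℝ)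
    (hmeas : ∀ i, Measurable (X i))
    (hindep : iIndepFun X P) (t : ℝ) (i : ℕ) :
    IndepFun (Set.indicator (Aset X t i) (fun _ => (1:ℝ))) (fun ω => Gf (X i ω)) P := by
  have hd : Disjoint (Finset.range i) ({i} : Finset ℕ) := by simp
  have h0 := hindep.indepFun_finset (Finset.range i) {i} hd hmeas
  set ext : (↥(Finset.range i) → ℝ) → ℕ → ℝ :=
    fun v k => if h : k ∈ Finset.range i then v ⟨k, h⟩ else 0 with hext
  have hextmeas : ∀ k, Measurable (fun v => ext v k) := by
    intro k
    rw [hext]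
    by_cases h : k ∈ Finset.range i
    · simp only [dif_pos h]
      exact measurable_pi_apply _
    · simp only [dif_neg h]
      exact measurable_const
  set D : Set (↥(Finset.range i) → ℝ) :=
    {v | ∀ j ≤ i, (∑ k ∈ Finset.range j, Gf (ext v k)) ≤ t} with hD
  have hDmeas : MeasurableSet D := by
    have : D = ⋂ j, ⋂ (_ : j ≤ i), {v | (∑ k ∈ Finset.range j, Gf (ext v k)) ≤ t} := by
      ext v; simp [hD]
    rw [this]
    exact MeasurableSet.iInter fun j => MeasurableSet.iInter fun _ =>
      measurableSet_le (Finset.measurable_sum _ fun k _ => Gf_meas.comp (hextmeas k))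
        measurable_const
  have hφ : Measurable (Set.indicator D (fun _ => (1:ℝ))) :=
    measurable_const.indicator hDmeas
  have hψ : Measurable (fun v : ↥({i} : Finset ℕ) → ℝ =>
      Gf (v ⟨i, by simp⟩)) := Gf_meas.comp (measurable_pi_apply _)
  have h1 := h0.comp hφ hψ
  convert h1 using 1
  funext ω
  have hmem : ((fun j : ↥(Finset.range i) => X j ω) ∈ D) ↔ ω ∈ Aset X t i := by
    simp only [hD, Set.mem_setOf_eq, Aset]
    apply forall_congr'; intro j
    apply imp_congr_right; intro hj
    have : (∑ k ∈ Finset.range j, Gf (ext (fun j : ↥(Finset.range i) => X j ω) k))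
        = Sf X j ω := by
      apply Finset.sum_congr rfl
      intro k hk
      have hki : k ∈ Finset.range i :=
        Finset.mem_range.2 (lt_of_lt_of_le (Finset.mem_range.1 hk) hj)
      simp [hext, hki, Finset.mem_range.1 hki]
    rw [this]
  simp only [Function.comp]
  by_cases h : ω ∈ Aset X t i
  · rw [Set.indicator_of_mem h, Set.indicator_of_mem (hmem.2 h)]
  · rw [Set.indicator_of_notMem h, Set.indicator_of_notMem (fun hc => h (hmem.1 hc))]
  rfl

lemma ae_mem_Icc (P : Measure Ω) [IsProbabilityMeasure P] (X : ℕ → Ω → ℝ)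
    (hmeas : ∀ i, Measurable (X i))
    (hunif : ∀ i, Measure.map (X i) P = volume.restrict (Set.Icc (0:ℝ) 1)) (i : ℕ) :
    ∀ᵐ ω ∂P, X i ω ∈ Set.Icc (0:ℝ) 1 := by
  have h1 : P (X i ⁻¹' Set.Icc (0:ℝ) 1) = 1 := by
    rw [← Measure.map_apply (hmeas i) measurableSet_Icc, hunif i,
      Measure.restrict_apply measurableSet_Icc]
    simp [Real.volume_Icc]
  have h2 : P (X i ⁻¹' Set.Icc (0:ℝ) 1)ᶜ = 0 := by
    rw [measure_compl ((hmeas i) measurableSet_Icc) (measure_ne_top _ _), h1, measure_univ]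
    simp
  exact (MeasureTheory.ae_iff).2 (by simpa [Set.preimage, Set.compl_setOf] using h2)

lemma integrable_G (P : Measure Ω) [IsProbabilityMeasure P] (X : ℕ → Ω → ℝ)
    (hmeas : ∀ i, Measurable (X i))
    (hunif : ∀ i, Measure.map (X i) P = volume.restrict (Set.Icc (0:ℝ) 1)) (i : ℕ) :
    Integrable (fun ω => Gf (X i ω)) P := by
  refine Integrable.mono' (integrable_const (1:ℝ))
    (Gf_meas.comp (hmeas i)).aestronglyMeasurable ?_
  filter_upwards [ae_mem_Icc P X hmeas hunif i] with ω hω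
  rw [Real.norm_eq_abs, abs_le]
  exact ⟨by linarith [Gf_nonneg hω], Gf_le_one hω⟩

lemma integral_G (P : Measure Ω) [IsProbabilityMeasure P] (X : ℕ → Ω → ℝ)
    (hmeas : ∀ i, Measurable (X i))
    (hunif : ∀ i, Measure.map (X i) P = volume.restrict (Set.Icc (0:ℝ) 1)) (i : ℕ) :
    ∫ ω, Gf (X i ω) ∂P = 1 / (Real.exp 1 - 1) := by
  have h := integral_map (μ := P) (hmeas i).aemeasurable
    (f := Gf) Gf_meas.aestronglyMeasurable
  rw [hunif i] at h
  rw [← h, aux_integral]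

def Bset (X : ℕ → Ω → ℝ) (t : ℝ) (i : ℕ) : Set Ω := {ω | i < hitTime Gf X t ω}

lemma hitTime_eq (X : ℕ → Ω → ℝ) (t : ℝ) (ω : Ω) :
    hitTime Gf X t ω = sInf {n : ℕ | t < Sf X n ω} := rfl

lemma Bset_eq (X : ℕ → Ω → ℝ) (t : ℝ) (i : ℕ) :
    Bset X t i = (⋃ m, {ω | t < Sf X m ω}) ∩ ⋂ j, ⋂ (_ : j ≤ i), {ω | Sf X j ω ≤ t} := by
  ext ω
  simp only [Bset, Set.mem_setOf_eq, hitTime_eq, nat_lt_sInf_iff, Set.mem_inter_iff,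
    Set.mem_iUnion, Set.mem_iInter]
  constructor
  · rintro ⟨⟨m, hm⟩, h2⟩
    exact ⟨⟨m, hm⟩, fun j hj => not_lt.1 (h2 j hj)⟩
  · rintro ⟨⟨m, hm⟩, h2⟩
    exact ⟨⟨m, hm⟩, fun j hj => not_lt.2 (h2 j hj)⟩

lemma Bset_meas (X : ℕ → Ω → ℝ) (hmeas : ∀ i, Measurable (X i)) (t : ℝ) (i : ℕ) :
    MeasurableSet (Bset X t i) := by
  rw [Bset_eq]
  exact (MeasurableSet.iUnion fun m =>
      measurableSet_lt measurable_const (Sf_meas X hmeas m)).inter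
    (MeasurableSet.iInter fun j => MeasurableSet.iInter fun _ =>
      measurableSet_le (Sf_meas X hmeas j) measurable_const)

lemma Bset_ae_eq (P : Measure Ω) (X : ℕ → Ω → ℝ) (t : ℝ)
    (hM : ∀ᵐ ω ∂P, ∃ m, t < Sf X m ω) (i : ℕ) :
    Bset X t i =ᵐ[P] Aset X t i := by
  rw [Filter.eventuallyEq_set]
  filter_upwards [hM] with ω hω
  simp only [Bset, Set.mem_setOf_eq, hitTime_eq, nat_lt_sInf_iff, Aset]
  constructor
  · rintro ⟨-, h2⟩ j hj
    exact not_lt.1 (h2 j hj)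
  · intro h
    exact ⟨hω, fun j hj => not_lt.2 (h j hj)⟩

lemma sum_min_hit (X : ℕ → Ω → ℝ) (t : ℝ) (ω : Ω) (n : ℕ) :
    Sf X (min (hitTime Gf X t ω) n) ω
      = ∑ i ∈ Finset.range n, Set.indicator (Bset X t i) (fun ω' => Gf (X i ω')) ω := by
  have h1 : ∀ i, Set.indicator (Bset X t i) (fun ω' => Gf (X i ω')) ω
      = if i < hitTime Gf X t ω then Gf (X i ω) else 0 := by
    intro i
    by_cases h : i < hitTime Gf X t ω
    · simp [Set.indicator, Bset, Set.mem_setOf_eq, h]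
    · simp [Set.indicator, Bset, Set.mem_setOf_eq, h]
  simp only [h1]
  rw [← Finset.sum_filter]
  have h2 : (Finset.range n).filter (fun i => i < hitTime Gf X t ω)
      = Finset.range (min (hitTime Gf X t ω) n) := by
    ext k; simp only [Finset.mem_filter, Finset.mem_range, lt_min_iff]; omega
  rw [h2]; rfl

lemma sum_min_one (X : ℕ → Ω → ℝ) (t : ℝ) (ω : Ω) (n : ℕ) :
    ((min (hitTime Gf X t ω) n : ℕ) : ℝ)
      = ∑ i ∈ Finset.range n, Set.indicator (Bset X t i) (fun _ => (1:ℝ)) ω := by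
  have h1 : ∀ i, Set.indicator (Bset X t i) (fun _ => (1:ℝ)) ω
      = if i < hitTime Gf X t ω then (1:ℝ) else 0 := by
    intro i
    by_cases h : i < hitTime Gf X t ω
    · simp [Set.indicator, Bset, Set.mem_setOf_eq, h]
    · simp [Set.indicator, Bset, Set.mem_setOf_eq, h]
  simp only [h1, Finset.sum_boole]
  have h2 : (Finset.range n).filter (fun i => i < hitTime Gf X t ω)
      = Finset.range (min (hitTime Gf X t ω) n) := by
    ext k; simp only [Finset.mem_filter, Finset.mem_range, lt_min_iff]; omega
  rw [h2]
  simp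

lemma integral_indicator_A (P : Measure Ω) [IsProbabilityMeasure P] (X : ℕ → Ω → ℝ)
    (hmeas : ∀ i, Measurable (X i))
    (hunif : ∀ i, Measure.map (X i) P = volume.restrict (Set.Icc (0:ℝ) 1))
    (hindep : iIndepFun X P) (t : ℝ) (i : ℕ) :
    ∫ ω, (Aset X t i).indicator (fun ω' => Gf (X i ω')) ω ∂P
      = (P (Aset X t i)).toReal * (1 / (Real.exp 1 - 1)) := by
  have heq : (Aset X t i).indicator (fun ω' => Gf (X i ω'))
      = (Set.indicator (Aset X t i) (fun _ => (1:ℝ))) * (fun ω => Gf (X i ω)) := by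
    funext ω
    by_cases h : ω ∈ Aset X t i <;> simp [Set.indicator, h]
  rw [heq, (indep_A P X hmeas hindep t i).integral_mul_eq_mul_integral
    ((integrable_const (1:ℝ)).indicator (Aset_meas X hmeas t i)).aestronglyMeasurable
    (integrable_G P X hmeas hunif i).aestronglyMeasurable,
    integral_indicator_const (1:ℝ) (Aset_meas X hmeas t i), integral_G P X hmeas hunif i]
  simp [Measure.real]

lemma ae_exists (P : Measure Ω) [IsProbabilityMeasure P] (X : ℕ → Ω → ℝ)
    (hmeas : ∀ i, Measurable (X i))
    (hunif : ∀ i, Measure.map (X i) P = volume.restrict (Set.Icc (0:ℝ) 1))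
    (hindep : iIndepFun X P) (t : ℝ) :
    ∀ᵐ ω ∂P, ∃ m, t < Sf X m ω := by
  have hident : ∀ i, IdentDistrib (fun ω => Gf (X i ω)) (fun ω => Gf (X 0 ω)) P P := by
    intro i
    refine ⟨(Gf_meas.comp (hmeas i)).aemeasurable, (Gf_meas.comp (hmeas 0)).aemeasurable, ?_⟩
    rw [show (fun ω => Gf (X i ω)) = Gf ∘ (X i) from rfl,
      show (fun ω => Gf (X 0 ω)) = Gf ∘ (X 0) from rfl,
      ← Measure.map_map Gf_meas (hmeas i), ← Measure.map_map Gf_meas (hmeas 0),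
      hunif i, hunif 0]
  have hpair : Pairwise (Function.onFun (IndepFun · · P) (fun i ω => Gf (X i ω))) :=
    fun i j hij => (hindep.indepFun hij).comp Gf_meas Gf_meas
  have h := strong_law_ae_real (fun i ω => Gf (X i ω))
    (integrable_G P X hmeas hunif 0) hpair hident
  rw [integral_G P X hmeas hunif 0] at h
  set c := 1 / (Real.exp 1 - 1) with hc
  have hcpos : 0 < c := div_pos one_pos e1_pos'
  filter_upwards [h] with ω hω
  have hev : ∀ᶠ n : ℕ in Filter.atTop, c / 2 < (∑ i ∈ Finset.range n, Gf (X i ω)) / n :=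
    hω.eventually (lt_mem_nhds (by linarith))
  obtain ⟨N, hN⟩ := Filter.eventually_atTop.1 hev
  set n0 : ℕ := max N (⌈2 * t / c⌉₊ + 1) with hn0
  have hn0N : N ≤ n0 := le_max_left _ _
  have hn0pos : 0 < n0 := lt_of_lt_of_le (Nat.succ_pos _) (le_max_right _ _)
  have h1 := hN n0 hn0N
  have h2 : (2 * t / c : ℝ) < n0 := by
    calc (2 * t / c : ℝ) ≤ ⌈2 * t / c⌉₊ := Nat.le_ceil _
    _ < n0 := by
      have : (⌈2 * t / c⌉₊ + 1 : ℕ) ≤ n0 := le_max_right _ _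
      exact_mod_cast Nat.lt_of_lt_of_le (Nat.lt_succ_self _) this
  refine ⟨n0, ?_⟩
  have hn0r : (0:ℝ) < n0 := by exact_mod_cast hn0pos
  rw [lt_div_iff₀ hn0r] at h1
  have h3 : t < c / 2 * n0 := by
    rw [div_lt_iff₀ hcpos] at h2
    nlinarith
  show t < ∑ i ∈ Finset.range n0, Gf (X i ω)
  linarith

lemma wald_key (P : Measure Ω) [IsProbabilityMeasure P] (X : ℕ → Ω → ℝ)
    (hmeas : ∀ i, Measurable (X i))
    (hunif : ∀ i, Measure.map (X i) P = volume.restrict (Set.Icc (0:ℝ) 1))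
    (hindep : iIndepFun X P) (t : ℝ)
    (hM : ∀ᵐ ω ∂P, ∃ m, t < Sf X m ω) (n : ℕ) :
    ∫ ω, Sf X (min (hitTime Gf X t ω) n) ω ∂P
      = (1 / (Real.exp 1 - 1)) * ∫ ω, ((min (hitTime Gf X t ω) n : ℕ) : ℝ) ∂P := by
  have hint : ∀ i, Integrable ((Bset X t i).indicator (fun ω => Gf (X i ω))) P :=
    fun i => (integrable_G P X hmeas hunif i).indicator (Bset_meas X hmeas t i)
  have hint1 : ∀ i, Integrable ((Bset X t i).indicator (fun _ => (1:ℝ))) P :=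
    fun i => (integrable_const 1).indicator (Bset_meas X hmeas t i)
  have e2 : ∀ i, ∫ ω, (Bset X t i).indicator (fun ω' => Gf (X i ω')) ω ∂P
      = (P (Bset X t i)).toReal * (1 / (Real.exp 1 - 1)) := by
    intro i
    rw [integral_congr_ae (indicator_ae_eq_of_ae_eq_set (Bset_ae_eq P X t hM i)),
      integral_indicator_A P X hmeas hunif hindep t i,
      measure_congr (Bset_ae_eq P X t hM i)]
  calc ∫ ω, Sf X (min (hitTime Gf X t ω) n) ω ∂P
      = ∫ ω, ∑ i ∈ Finset.range n,
          (Bset X t i).indicator (fun ω' => Gf (X i ω')) ω ∂P :=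
        integral_congr_ae (Filter.Eventually.of_forall (fun ω => sum_min_hit X t ω n))
    _ = ∑ i ∈ Finset.range n,
          ∫ ω, (Bset X t i).indicator (fun ω' => Gf (X i ω')) ω ∂P :=
        integral_finset_sum _ (fun i _ => hint i)
    _ = ∑ i ∈ Finset.range n, (P (Bset X t i)).toReal * (1 / (Real.exp 1 - 1)) :=
        Finset.sum_congr rfl (fun i _ => e2 i)
    _ = (1 / (Real.exp 1 - 1)) * ∑ i ∈ Finset.range n, (P (Bset X t i)).toReal := by
        rw [Finset.mul_sum]; exact Finset.sum_congr rfl (fun i _ => mul_comm _ _)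
    _ = (1 / (Real.exp 1 - 1)) * ∫ ω, ((min (hitTime Gf X t ω) n : ℕ) : ℝ) ∂P := by
        congr 1
        rw [integral_congr_ae (Filter.Eventually.of_forall (fun ω => sum_min_one X t ω n)),
          integral_finset_sum _ (fun i _ => hint1 i)]
        exact Finset.sum_congr rfl (fun i _ => by
          rw [integral_indicator_const (1:ℝ) (Bset_meas X hmeas t i)]; simp [Measure.real])

lemma K_meas (X : ℕ → Ω → ℝ) (hmeas : ∀ i, Measurable (X i)) (t : ℝ) :
    Measurable (fun ω => hitTime Gf X t ω) := by
  apply measurable_to_countable'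
  intro k
  match k with
  | 0 =>
    have h : (fun ω => hitTime Gf X t ω) ⁻¹' {0} = (Bset X t 0)ᶜ := by
      ext ω; simp only [Set.mem_preimage, Set.mem_singleton_iff, Set.mem_compl_iff,
        Bset, Set.mem_setOf_eq]; omega
    rw [h]; exact (Bset_meas X hmeas t 0).compl
  | (k+1) =>
    have h : (fun ω => hitTime Gf X t ω) ⁻¹' {k+1} = Bset X t k ∩ (Bset X t (k+1))ᶜ := by
      ext ω; simp only [Set.mem_preimage, Set.mem_singleton_iff, Set.mem_inter_iff,
        Set.mem_compl_iff, Bset, Set.mem_setOf_eq]; omega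
    rw [h]; exact (Bset_meas X hmeas t k).inter (Bset_meas X hmeas t (k+1)).compl

lemma Sf_mono (X : ℕ → Ω → ℝ) {ω : Ω} (hx : ∀ i, X i ω ∈ Set.Icc (0:ℝ) 1) :
    Monotone (fun n => Sf X n ω) := fun a b hab =>
  Finset.sum_le_sum_of_subset_of_nonneg (Finset.range_subset_range.2 hab)
    (fun i _ _ => Gf_nonneg (hx i))

lemma Sf_nonneg (X : ℕ → Ω → ℝ) {ω : Ω} (hx : ∀ i, X i ω ∈ Set.Icc (0:ℝ) 1) (n : ℕ) :
    0 ≤ Sf X n ω :=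
  Finset.sum_nonneg (fun i _ => Gf_nonneg (hx i))

lemma Sf_min_le (X : ℕ → Ω → ℝ) (t : ℝ) {ω : Ω} (ht : 0 ≤ t)
    (hx : ∀ i, X i ω ∈ Set.Icc (0:ℝ) 1) (m : ℕ) (hm : m ≤ hitTime Gf X t ω) :
    Sf X m ω ≤ t + 1 := by
  match m with
  | 0 => simp only [Sf, Finset.range_zero, Finset.sum_empty]; linarith
  | (p+1) =>
    have hp : p < hitTime Gf X t ω := lt_of_lt_of_le (Nat.lt_succ_self p) hm
    rw [hitTime_eq, nat_lt_sInf_iff] at hp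
    have hSp : Sf X p ω ≤ t := not_lt.1 (hp.2 p le_rfl)
    have h1 : Sf X (p+1) ω = Sf X p ω + Gf (X p ω) := Finset.sum_range_succ _ _
    have h2 := Gf_le_one (hx p)
    linarith

end Main

theorem stmt_12 {Ω : Type*} [MeasurableSpace Ω] (P : Measure Ω) [IsProbabilityMeasure P]
    (X : ℕ → Ω → ℝ) (hmeas : ∀ i, Measurable (X i))
    (hunif : ∀ i, Measure.map (X i) P = volume.restrict (Set.Icc (0:ℝ) 1))
    (hindep : iIndepFun X P) :
    ∀ t ≥ (0:ℝ),
      (∀ᵐ ω ∂P, ∃ n : ℕ,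
        t < ∑ i ∈ Finset.range n, Real.log (1 + (Real.exp 1 - 1) * X i ω)) ∧
      (Real.exp 1 - 1) * t <
        (∫ ω, (hitTime (fun x => Real.log (1 + (Real.exp 1 - 1) * x)) X t ω : ℝ) ∂P) ∧
      (∫ ω, (hitTime (fun x => Real.log (1 + (Real.exp 1 - 1) * x)) X t ω : ℝ) ∂P) ≤
        (Real.exp 1 - 1) * (t + 1) := by
  intro t ht
  have hGF : (fun x => Real.log (1 + (Real.exp 1 - 1) * x)) = Gf := rfl
  rw [hGF]
  have hM : ∀ᵐ ω ∂P, ∃ m, t < Sf X m ω := ae_exists P X hmeas hunif hindep t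
  refine ⟨hM, ?_⟩
  set K : Ω → ℕ := fun ω => hitTime Gf X t ω with hK
  have hgood : ∀ᵐ ω ∂P, ∀ i, X i ω ∈ Set.Icc (0:ℝ) 1 :=
    ae_all_iff.2 (fun i => ae_mem_Icc P X hmeas hunif i)
  have hKmeas : Measurable K := K_meas X hmeas t
  have hc : (0:ℝ) < Real.exp 1 - 1 := e1_pos'
  -- measurability and integrability of the truncated quantities
  have hmin_meas : ∀ n : ℕ, Measurable (fun ω => ((min (K ω) n : ℕ) : ℝ)) :=
    fun n => (measurable_of_countable (fun k : ℕ => ((min k n : ℕ) : ℝ))).comp hKmeas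
  have hmin_int : ∀ n : ℕ, Integrable (fun ω => ((min (K ω) n : ℕ) : ℝ)) P := by
    intro n
    refine Integrable.mono' (integrable_const (n:ℝ)) (hmin_meas n).aestronglyMeasurable
      (Filter.Eventually.of_forall fun ω => ?_)
    rw [Real.norm_eq_abs, abs_of_nonneg (by positivity)]
    exact_mod_cast min_le_right _ _
  have hSmin_meas : ∀ n : ℕ, Measurable (fun ω => Sf X (min (K ω) n) ω) := by
    intro n
    have heq : (fun ω => Sf X (min (K ω) n) ω)
        = (fun p : Ω × ℕ => Sf X (min p.2 n) p.1) ∘ (fun ω => (ω, K ω)) := rfl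
    rw [heq]
    exact (measurable_from_prod_countable_left
      (fun k : ℕ => Sf_meas X hmeas (min k n))).comp (measurable_id.prodMk hKmeas)
  have hSmin_bd : ∀ n : ℕ, ∀ᵐ ω ∂P, ‖Sf X (min (K ω) n) ω‖ ≤ t + 1 := by
    intro n
    filter_upwards [hgood] with ω hω
    rw [Real.norm_eq_abs, abs_of_nonneg (Sf_nonneg X hω _)]
    exact Sf_min_le X t ht hω _ (min_le_left _ _)
  have hSmin_int : ∀ n : ℕ, Integrable (fun ω => Sf X (min (K ω) n) ω) P := fun n =>
    Integrable.mono' (integrable_const (t+1)) (hSmin_meas n).aestronglyMeasurable (hSmin_bd n)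
  have hSK_meas : Measurable (fun ω => Sf X (K ω) ω) := by
    have heq : (fun ω => Sf X (K ω) ω)
        = (fun p : Ω × ℕ => Sf X p.2 p.1) ∘ (fun ω => (ω, K ω)) := rfl
    rw [heq]
    exact (measurable_from_prod_countable_left
      (fun k : ℕ => Sf_meas X hmeas k)).comp (measurable_id.prodMk hKmeas)
  have hSK_bd : ∀ᵐ ω ∂P, ‖Sf X (K ω) ω‖ ≤ t + 1 := by
    filter_upwards [hgood] with ω hω
    rw [Real.norm_eq_abs, abs_of_nonneg (Sf_nonneg X hω _)]
    exact Sf_min_le X t ht hω _ le_rfl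
  have hSK_int : Integrable (fun ω => Sf X (K ω) ω) P :=
    Integrable.mono' (integrable_const (t+1)) hSK_meas.aestronglyMeasurable hSK_bd
  -- Wald identity for truncated times
  have key : ∀ n : ℕ, ∫ ω, ((min (K ω) n : ℕ) : ℝ) ∂P
      = (Real.exp 1 - 1) * ∫ ω, Sf X (min (K ω) n) ω ∂P := by
    intro n
    have h := wald_key P X hmeas hunif hindep t hM n
    rw [h]
    field_simp
    rfl
  -- per-n bound on the integral
  have hintS_le : ∀ n : ℕ, ∫ ω, Sf X (min (K ω) n) ω ∂P ≤ t + 1 := by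
    intro n
    have h := integral_mono_ae (hSmin_int n) (integrable_const (t+1)) ?_
    · simpa using h
    · filter_upwards [hSmin_bd n] with ω hω
      exact le_trans (le_abs_self _) hω
  have hmin_le : ∀ n : ℕ, ∫ ω, ((min (K ω) n : ℕ) : ℝ) ∂P ≤ (Real.exp 1 - 1) * (t + 1) := by
    intro n
    rw [key n]
    exact mul_le_mul_of_nonneg_left (hintS_le n) hc.le
  -- K is integrable
  have hKmeasR : Measurable (fun ω => (K ω : ℝ)) :=
    (measurable_of_countable (fun k : ℕ => (k : ℝ))).comp hKmeas
  have hKint : Integrable (fun ω => (K ω : ℝ)) P := by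
    refine ⟨hKmeasR.aestronglyMeasurable, ?_⟩
    have hsup : ∀ ω, (K ω : ℝ≥0∞) = ⨆ n : ℕ, ((min (K ω) n : ℕ) : ℝ≥0∞) := by
      intro ω
      apply le_antisymm
      · exact le_iSup_of_le (K ω) (by simp)
      · exact iSup_le fun n => by exact_mod_cast Nat.cast_le.2 (min_le_left _ _)
    have hmono : Monotone (fun n : ℕ => fun ω => ((min (K ω) n : ℕ) : ℝ≥0∞)) := by
      intro a b hab
      exact fun ω => Nat.cast_le.2 (min_le_min le_rfl hab)
    have hlim : ∫⁻ ω, (K ω : ℝ≥0∞) ∂P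
        = ⨆ n : ℕ, ∫⁻ ω, ((min (K ω) n : ℕ) : ℝ≥0∞) ∂P := by
      rw [lintegral_congr hsup]
      exact lintegral_iSup
        (fun n => (measurable_of_countable (fun k : ℕ => ((min k n : ℕ) : ℝ≥0∞))).comp hKmeas)
        hmono
    have hbd : ∀ n : ℕ, ∫⁻ ω, ((min (K ω) n : ℕ) : ℝ≥0∞) ∂P
        ≤ ENNReal.ofReal ((Real.exp 1 - 1) * (t + 1)) := by
      intro n
      have h1 := ofReal_integral_eq_lintegral_ofReal (hmin_int n)
        (Filter.Eventually.of_forall (fun ω => by positivity))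
      have h2 : ∫⁻ ω, ENNReal.ofReal ((min (K ω) n : ℕ) : ℝ) ∂P
          = ∫⁻ ω, ((min (K ω) n : ℕ) : ℝ≥0∞) ∂P :=
        lintegral_congr (fun ω => ENNReal.ofReal_natCast _)
      rw [← h2, ← h1]
      exact ENNReal.ofReal_le_ofReal (hmin_le n)
    have hfin : ∫⁻ ω, (K ω : ℝ≥0∞) ∂P < ⊤ := by
      rw [hlim]
      exact lt_of_le_of_lt (iSup_le hbd) ENNReal.ofReal_lt_top
    have : ∫⁻ ω, (‖(K ω : ℝ)‖₊ : ℝ≥0∞) ∂P = ∫⁻ ω, (K ω : ℝ≥0∞) ∂P :=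
      lintegral_congr (fun ω => by simp)
    simpa [HasFiniteIntegral, this] using hfin
  -- pass to the limit
  have htendK : Filter.Tendsto (fun n => ∫ ω, ((min (K ω) n : ℕ) : ℝ) ∂P)
      Filter.atTop (nhds (∫ ω, (K ω : ℝ) ∂P)) := by
    refine integral_tendsto_of_tendsto_of_monotone hmin_int hKint
      (Filter.Eventually.of_forall fun ω => ?_)
      (Filter.Eventually.of_forall fun ω => ?_)
    · intro a b hab
      exact_mod_cast Nat.cast_le.2 (min_le_min le_rfl hab)
    · refine Filter.Tendsto.congr' ?_ tendsto_const_nhds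
      filter_upwards [Filter.eventually_ge_atTop (K ω)] with n hn
      rw [min_eq_left hn]
  have htendS : Filter.Tendsto (fun n => ∫ ω, Sf X (min (K ω) n) ω ∂P)
      Filter.atTop (nhds (∫ ω, Sf X (K ω) ω ∂P)) := by
    refine integral_tendsto_of_tendsto_of_monotone hSmin_int hSK_int ?_
      (Filter.Eventually.of_forall fun ω => ?_)
    · filter_upwards [hgood] with ω hω
      intro a b hab
      exact Sf_mono X hω (min_le_min le_rfl hab)
    · refine Filter.Tendsto.congr' ?_ tendsto_const_nhds
      filter_upwards [Filter.eventually_ge_atTop (K ω)] with n hn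
      rw [min_eq_left hn]
  have hidentity : ∫ ω, (K ω : ℝ) ∂P = (Real.exp 1 - 1) * ∫ ω, Sf X (K ω) ω ∂P := by
    refine tendsto_nhds_unique htendK ?_
    have := htendS.const_mul (Real.exp 1 - 1)
    exact this.congr (fun n => (key n).symm)
  constructor
  · -- lower bound
    have hgt : ∀ᵐ ω ∂P, t < Sf X (K ω) ω := by
      filter_upwards [hM] with ω hω
      have : sInf {n : ℕ | t < Sf X n ω} ∈ {n : ℕ | t < Sf X n ω} := Nat.sInf_mem hω
      exact this
    have hfpos : 0 < ∫ ω, (Sf X (K ω) ω - t) ∂P := by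
      rw [integral_pos_iff_support_of_nonneg_ae]
      · have hcnull : P (Function.support (fun ω => Sf X (K ω) ω - t))ᶜ = 0 := by
          refine measure_mono_null ?_ (ae_iff.1 hgt)
          intro ω hω
          simp only [Set.mem_compl_iff, Function.mem_support, not_not] at hω
          simp only [Set.mem_setOf_eq, not_lt]
          linarith
        have h1 : (1:ℝ≥0∞) ≤ P (Function.support (fun ω => Sf X (K ω) ω - t)) := by
          calc (1:ℝ≥0∞) = P Set.univ := (measure_univ).symm
          _ = P (Function.support (fun ω => Sf X (K ω) ω - t)
                ∪ (Function.support (fun ω => Sf X (K ω) ω - t))ᶜ) := by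
              rw [Set.union_compl_self]
          _ ≤ P (Function.support (fun ω => Sf X (K ω) ω - t))
                + P (Function.support (fun ω => Sf X (K ω) ω - t))ᶜ := measure_union_le _ _
          _ = P (Function.support (fun ω => Sf X (K ω) ω - t)) := by rw [hcnull, add_zero]
        exact lt_of_lt_of_le zero_lt_one h1
      · filter_upwards [hgt] with ω hω
        show (0:ℝ) ≤ Sf X (K ω) ω - t
        linarith
      · exact hSK_int.sub (integrable_const t)
    rw [integral_sub hSK_int (integrable_const t), integral_const] at hfpos
    simp only [probReal_univ, ENNReal.toReal_one, one_smul] at hfpos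
    rw [hidentity]
    nlinarith
  · -- upper bound
    rw [hidentity]
    have hle : ∫ ω, Sf X (K ω) ω ∂P ≤ t + 1 := by
      have h := integral_mono_ae hSK_int (integrable_const (t+1)) ?_
      · simpa using h
      · filter_upwards [hSK_bd] with ω hω
        exact le_trans (le_abs_self _) hω
    exact mul_le_mul_of_nonneg_left hle hc.le
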